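/- arXiv:2004.09229 — 6 statements merged into one kernel-verified Lean document; each statement's English description precedes it below -/
import Mathlib

section
/- Let M be a CG-lattice L-module, N ∈ M a proper element, and δ an expansion function on M. Then the following are equivalent: (1) N is a δ-primary element of M; (2) for every r ∈ L with r ≰ (δ(N):I_M), one has (N:r) = N; (3) for every compact r ∈ L and compact A ∈ M, rA ≤ N implies A ≤ N or rI_M ≤ δ(N). -/
open CompleteLattice

universe u v

/-- A multiplicative lattice: a complete lattice with a commutative, associative
multiplication distributing over arbitrary joins, whose top element is the
multiplicative identity. -/
class MultiplicativeLattice (L : Type u) extends CompleteLattice L, CommMonoid L where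
  one_eq_top : (1 : L) = ⊤
  sSup_mul : ∀ (S : Set L) (b : L), sSup S * b = ⨆ a ∈ S, a * b

/-- A lattice module over a multiplicative lattice. -/
class LatticeModule (L : Type u) [MultiplicativeLattice L] (M : Type v)
    extends CompleteLattice M, SMul L M where
  sSup_smul : ∀ (S : Set L) (A : M), (SupSet.sSup S : L) • A = ⨆ a ∈ S, a • A
  smul_sSup : ∀ (a : L) (S : Set M), a • sSup S = ⨆ B ∈ S, a • B
  mul_smul : ∀ (a b : L) (A : M), (a * b) • A = a • b • A
  one_smul : ∀ A : M, (1 : L) • A = A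
  bot_smul : ∀ A : M, (⊥ : L) • A = (⊥ : M)

section LatticeDefs

variable {L : Type u} [MultiplicativeLattice L]

/-- The residual `(a : b)` in `L`. -/
def lColon (a b : L) : L := sSup {x : L | x * b ≤ a}

/-- The radical `√a` of an element of `L`. -/
def radL (a : L) : L :=
  sSup {x : L | IsCompactElement x ∧ ∃ n : ℕ, 1 ≤ n ∧ x ^ n ≤ a}

/-- A principal element of a multiplicative lattice (meet principal and join principal). -/
def IsPrincipalElemL (e : L) : Prop :=
  (∀ a b : L, a ⊓ b * e = (lColon a e ⊓ b) * e) ∧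
  (∀ a b : L, lColon (a * e ⊔ b) e = lColon b e ⊔ a)

/-- An expansion function on `L`. -/
def IsExpansionL (δ : L → L) : Prop :=
  (∀ a : L, a ≤ δ a) ∧ ∀ a b : L, a ≤ b → δ a ≤ δ b

/-- A 2-absorbing element of `L`. -/
def Is2AbsorbingL (q : L) : Prop :=
  q < ⊤ ∧ ∀ a b c : L, a * b * c ≤ q → a * b ≤ q ∨ b * c ≤ q ∨ c * a ≤ q

/-- A 2-absorbing primary element of `L`. -/
def Is2AbsorbingPrimaryL (q : L) : Prop :=
  q < ⊤ ∧ ∀ a b c : L, a * b * c ≤ q → a * b ≤ q ∨ b * c ≤ radL q ∨ c * a ≤ radL q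

/-- A `δL`-primary element of `L`. -/
def IsDeltaLPrimaryL (δL : L → L) (p : L) : Prop :=
  p < ⊤ ∧ ∀ a b : L, a * b ≤ p → a ≤ p ∨ b ≤ δL p

end LatticeDefs

/-- `L` is a PG-lattice: every element is a join of principal elements. -/
def IsPGLattice (L : Type u) [MultiplicativeLattice L] : Prop :=
  ∀ a : L, a = sSup {e : L | IsPrincipalElemL e ∧ e ≤ a}

section ModuleDefs

variable (L : Type u) {M : Type v} [MultiplicativeLattice L] [LatticeModule L M]

/-- The element `(A : B)` of `L`, for `A B : M`. -/
def mColon (A B : M) : L := sSup {x : L | x • B ≤ A}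

/-- The element `(N : a)` of `M`, for `N : M`, `a : L`. -/
def resColon (N : M) (a : L) : M := sSup {X : M | a • X ≤ N}

/-- An expansion function on the `L`-module `M`. -/
def IsExpansionM (δ : M → M) : Prop :=
  (∀ A : M, A ≤ δ A) ∧ ∀ A B : M, A ≤ B → δ A ≤ δ B

/-- A `δ`-primary element of the `L`-module `M`. -/
def IsDeltaPrimaryM (δ : M → M) (P : M) : Prop :=
  P < ⊤ ∧ ∀ (a : L) (A : M), a • A ≤ P → A ≤ P ∨ a • (⊤ : M) ≤ δ P

/-- A prime element of the `L`-module `M`. -/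
def IsPrimeM (P : M) : Prop :=
  P < ⊤ ∧ ∀ (a : L) (A : M), a • A ≤ P → A ≤ P ∨ a • (⊤ : M) ≤ P

/-- A primary element of the `L`-module `M`. -/
def IsPrimaryM (P : M) : Prop :=
  P < ⊤ ∧ ∀ (a : L) (A : M), a • A ≤ P → A ≤ P ∨ ∃ n : ℕ, 1 ≤ n ∧ a ^ n • (⊤ : M) ≤ P

/-- A principal element of the `L`-module `M` (meet principal and join principal). -/
def IsPrincipalElemM (N : M) : Prop :=
  (∀ (b : L) (B : M), (b ⊓ mColon L B N) • N = b • N ⊓ B) ∧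
  (∀ (b : L) (B : M), b ⊔ mColon L B N = mColon L (b • N ⊔ B) N)

/-- A maximal element of the `L`-module `M`. -/
def IsMaximalM (H : M) : Prop :=
  H < ⊤ ∧ ∀ B : M, H ≤ B → B = H ∨ B = ⊤

/-- A meet prime element of the `L`-module `M`. -/
def IsMeetPrimeM (N : M) : Prop :=
  N < ⊤ ∧ ∀ A B : M, A ⊓ B ≤ N → A ≤ N ∨ B ≤ N

/-- The expansion function `δ₁` on a multiplication `L`-module `M`:
`δ₁(A) = (√(A : I_M)) I_M`. -/
def delta1 (A : M) : M := radL (mColon L A (⊤ : M)) • (⊤ : M)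

/-- The expansion function `δ₂`: meet of all maximal elements above a proper element. -/
noncomputable def delta2 (A : M) : M := by
  classical exact if A = ⊤ then ⊤ else sInf {H : M | A ≤ H ∧ IsMaximalM L H}

/-- A 2-absorbing primary element of the `L`-module `M`. -/
def Is2AbsorbingPrimaryM (Q : M) : Prop :=
  Q < ⊤ ∧ ∀ (a b : L) (N : M), (a * b) • N ≤ Q →
    a * b ≤ mColon L Q (⊤ : M) ∨
    b • N ≤ radL (mColon L Q (⊤ : M)) • (⊤ : M) ∨
    a • N ≤ radL (mColon L Q (⊤ : M)) • (⊤ : M)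

/-- A `δL`-primary element of the `L`-module `M`, for an expansion function `δL` on `L`. -/
def IsDeltaLPrimaryM (δL : L → L) (P : M) : Prop :=
  P < ⊤ ∧ ∀ (a : L) (A : M), a • A ≤ P → A ≤ P ∨ a ≤ δL (mColon L P (⊤ : M))

end ModuleDefs

/-- `M` is a PG-lattice `L`-module: every element is a join of principal elements. -/
def IsPGModule (L : Type u) (M : Type v) [MultiplicativeLattice L] [LatticeModule L M] : Prop :=
  ∀ N : M, N = sSup {E : M | IsPrincipalElemM L E ∧ E ≤ N}

/-- `M` is a multiplication `L`-module. -/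
def IsMultiplicationModule (L : Type u) (M : Type v)
    [MultiplicativeLattice L] [LatticeModule L M] : Prop :=
  ∀ N : M, ∃ a : L, N = a • (⊤ : M)

/-- `M` is a faithful `L`-module: `(O_M : I_M) = 0`. -/
def IsFaithfulModule (L : Type u) (M : Type v)
    [MultiplicativeLattice L] [LatticeModule L M] : Prop :=
  mColon L (⊥ : M) (⊤ : M) = (⊥ : L)

section Aux
variable {L : Type u} {M : Type v} [MultiplicativeLattice L] [LatticeModule L M]

lemma sSup_smul_le {S : Set L} {A B : M} (h : ∀ a ∈ S, a • A ≤ B) :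
    (sSup S : L) • A ≤ B := by
  rw [LatticeModule.sSup_smul]
  exact iSup₂_le h

lemma smul_le_smul_mono_left {a b : L} (A : M) (h : a ≤ b) : a • A ≤ b • A := by
  have h2 : sSup ({a, b} : Set L) = b := by
    rw [sSup_pair, sup_eq_right.2 h]
  calc a • A ≤ ⨆ x ∈ ({a, b} : Set L), x • A :=
        le_biSup (fun x => x • A) (by simp)
    _ = (sSup ({a, b} : Set L)) • A := (LatticeModule.sSup_smul _ _).symm
    _ = b • A := by rw [h2]

lemma smul_le_smul_mono_right (a : L) {A B : M} (h : A ≤ B) : a • A ≤ a • B := by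
  have h2 : sSup ({A, B} : Set M) = B := by
    rw [sSup_pair, sup_eq_right.2 h]
  calc a • A ≤ ⨆ X ∈ ({A, B} : Set M), a • X :=
        le_biSup (fun X => a • X) (by simp)
    _ = a • (sSup ({A, B} : Set M)) := (LatticeModule.smul_sSup _ _).symm
    _ = a • B := by rw [h2]

lemma mColon_smul_le (A B : M) : mColon L A B • B ≤ A := by
  apply sSup_smul_le; exact fun x hx => hx

lemma le_mColon_iff {x : L} {A B : M} : x ≤ mColon L A B ↔ x • B ≤ A := by
  constructor
  · intro h
    exact le_trans (smul_le_smul_mono_left B h) (mColon_smul_le A B)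
  · intro h; exact le_sSup h

lemma smul_resColon_le (a : L) (N : M) : a • resColon L N a ≤ N := by
  unfold resColon
  rw [LatticeModule.smul_sSup]
  exact iSup₂_le fun X hX => hX

lemma le_resColon_iff {a : L} {X N : M} : X ≤ resColon L N a ↔ a • X ≤ N := by
  constructor
  · intro h
    exact le_trans (smul_le_smul_mono_right a h) (smul_resColon_le a N)
  · intro h; exact le_sSup h

end Aux

theorem stmt1 {L : Type u} {M : Type v} [MultiplicativeLattice L] [LatticeModule L M]
    [IsCompactlyGenerated M]
    [IsCompactlyGenerated L]
    (h1cpt : IsCompactElement (1 : L))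
    (hmulcpt : ∀ a b : L, IsCompactElement a → IsCompactElement b → IsCompactElement (a * b))
    (N : M) (hN : N < ⊤) (δ : M → M) (hδ : IsExpansionM L δ) :
    List.TFAE [IsDeltaPrimaryM L δ N,
      ∀ r : L, ¬ r ≤ mColon L (δ N) (⊤ : M) → resColon L N r = N,
      ∀ (r : L) (A : M), IsCompactElement r → IsCompactElement A →
        r • A ≤ N → A ≤ N ∨ r • (⊤ : M) ≤ δ N] := by
  tfae_have 1 → 2 := by
    rintro ⟨hNt, hP⟩ r hr
    refine le_antisymm ?_ (le_resColon_iff.2 ?_)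
    · rcases hP r (resColon L N r) (smul_resColon_le r N) with h | h
      · exact h
      · exact absurd (le_mColon_iff.2 h) hr
    · have h1 : r ≤ (1 : L) := by rw [MultiplicativeLattice.one_eq_top]; exact le_top
      calc r • N ≤ (1 : L) • N := smul_le_smul_mono_left N h1
        _ = N := LatticeModule.one_smul N
  tfae_have 2 → 3 := by
    intro h2 r A _ _ hrA
    by_cases hr : r ≤ mColon L (δ N) (⊤ : M)
    · exact Or.inr (le_trans (smul_le_smul_mono_left ⊤ hr) (mColon_smul_le _ _))
    · left
      rw [← h2 r hr]
      exact le_resColon_iff.2 hrA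
  tfae_have 3 → 1 := by
    intro h3
    refine ⟨hN, fun a A haA => ?_⟩
    by_cases hA : A ≤ N
    · exact Or.inl hA
    · right
      -- find compact C ≤ A with C ≰ N
      obtain ⟨C, ⟨hCc, hCA⟩, hCN⟩ : ∃ C : M, (IsCompactElement C ∧ C ≤ A) ∧ ¬ C ≤ N := by
        by_contra hco
        push_neg at hco
        apply hA
        calc A = sSup {c : M | IsCompactElement c ∧ c ≤ A} := (sSup_compact_le_eq A).symm
          _ ≤ N := sSup_le fun c hc => hco c hc
      have key : ∀ r : L, IsCompactElement r → r ≤ a → r • (⊤ : M) ≤ δ N := by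
        intro r hrc hra
        refine (h3 r C hrc hCc ?_).resolve_left hCN
        calc r • C ≤ a • A :=
              le_trans (smul_le_smul_mono_left C hra) (smul_le_smul_mono_right a hCA)
          _ ≤ N := haA
      calc a • (⊤ : M) = sSup {r : L | IsCompactElement r ∧ r ≤ a} • (⊤ : M) := by
            rw [sSup_compact_le_eq a]
        _ ≤ δ N := sSup_smul_le fun r hr => key r hr.1 hr.2
  tfae_finish
end

section
/- Let δ be an expansion function on an L-module M and let P ∈ M be δ-primary. Then: (1) (P:a) = P for every a ∈ L with aI_M ≰ δ(P); (2) for every q ∈ L such that (P:q) is proper, (P:q) is a δ-primary element of M. -/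
open CompleteLattice

universe u v

lemma smul_le_self' {L : Type u} {M : Type v} [MultiplicativeLattice L] [LatticeModule L M]
    (a : L) (A : M) : a • A ≤ A := by
  have h := LatticeModule.sSup_smul ({a, 1} : Set L) A
  have h1 : sSup ({a, 1} : Set L) = 1 := by
    rw [MultiplicativeLattice.one_eq_top]
    simp [sSup_pair]
  rw [h1, LatticeModule.one_smul] at h
  have : a • A ≤ ⨆ b ∈ ({a, 1} : Set L), b • A :=
    le_biSup (fun b => b • A) (by simp : a ∈ ({a, 1} : Set L))
  rw [← h] at this
  calc a • A ≤ A ⊔ a • A := le_sup_right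
    _ = A := by
        apply sup_eq_left.mpr
        exact this

lemma smul_resColon_le_s7 {L : Type u} {M : Type v} [MultiplicativeLattice L] [LatticeModule L M]
    (P : M) (a : L) : a • resColon L P a ≤ P := by
  rw [resColon, LatticeModule.smul_sSup]
  exact iSup₂_le fun X hX => hX

lemma smul_mono_right' {L : Type u} {M : Type v} [MultiplicativeLattice L] [LatticeModule L M]
    (a : L) {A B : M} (h : A ≤ B) : a • A ≤ a • B := by
  have hs := LatticeModule.smul_sSup a ({A, B} : Set M)
  have h1 : sSup ({A, B} : Set M) = B := by simp [sSup_pair, sup_eq_right.mpr h]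
  rw [h1] at hs
  have : a • A ≤ ⨆ X ∈ ({A, B} : Set M), a • X :=
    le_biSup (fun X => a • X) (by simp : A ∈ ({A, B} : Set M))
  rwa [← hs] at this

lemma le_resColon {L : Type u} {M : Type v} [MultiplicativeLattice L] [LatticeModule L M]
    {P X : M} {a : L} (h : a • X ≤ P) : X ≤ resColon L P a :=
  le_sSup h

theorem stmt7 {L : Type u} {M : Type v} [MultiplicativeLattice L] [LatticeModule L M]
    (δ : M → M) (hδ : IsExpansionM L δ) (P : M) (hP : IsDeltaPrimaryM L δ P) :
    (∀ a : L, ¬ a • (⊤ : M) ≤ δ P → resColon L P a = P) ∧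
    (∀ q : L, resColon L P q < ⊤ → IsDeltaPrimaryM L δ (resColon L P q)) := by
  have hPle : ∀ a : L, P ≤ resColon L P a := fun a =>
    le_resColon (le_trans (smul_le_self' a P) le_rfl)
  constructor
  · intro a ha
    refine le_antisymm ?_ (hPle a)
    rw [resColon]
    apply _root_.sSup_le
    intro X hX
    rcases hP.2 a X hX with h | h
    · exact h
    · exact absurd h ha
  · intro q hq
    refine ⟨hq, ?_⟩
    intro a A hA
    have h1 : a • (q • A) ≤ P := by
      have h2 : q • (a • A) ≤ q • resColon L P q := smul_mono_right' q hA
      have h3 : q • (a • A) ≤ P := le_trans h2 (smul_resColon_le_s7 P q)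
      calc a • (q • A) = (a * q) • A := (LatticeModule.mul_smul a q A).symm
        _ = (q * a) • A := by rw [mul_comm]
        _ = q • (a • A) := LatticeModule.mul_smul q a A
        _ ≤ P := h3
    rcases hP.2 a (q • A) h1 with h | h
    · exact Or.inl (le_resColon h)
    · exact Or.inr (le_trans h (hδ.2 P _ (hPle q)))
end

section
/- Let δ be an expansion function on an L-module M having the meet preserving property. If Q₁, Q₂, …, Q_n (n ≥ 1) are δ-primary elements of M and there is P ∈ M with P = δ(Q_i) for all i = 1, …, n, then Q = Q₁ ∧ Q₂ ∧ ⋯ ∧ Q_n is also a δ-primary element of M. -/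
open CompleteLattice

universe u v

theorem stmt9 {L : Type u} {M : Type v} [MultiplicativeLattice L] [LatticeModule L M]
    (δ : M → M) (hδ : IsExpansionM L δ)
    (hmeet : ∀ A B : M, δ (A ⊓ B) = δ A ⊓ δ B)
    (n : ℕ) (hn : 1 ≤ n) (Q : Fin n → M)
    (hQ : ∀ i, IsDeltaPrimaryM L δ (Q i))
    (P : M) (hP : ∀ i, δ (Q i) = P) :
    IsDeltaPrimaryM L δ (⨅ i, Q i) := by
  have i0 : Fin n := ⟨0, hn⟩
  have hne : (Finset.univ : Finset (Fin n)).Nonempty := ⟨i0, Finset.mem_univ i0⟩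
  -- δ preserves finite infs
  have key : (⨅ i, δ (Q i)) ≤ δ (⨅ i, Q i) := by
    let f : InfHom M M := ⟨δ, hmeet⟩
    have h1 : δ (Finset.univ.inf' hne Q) = Finset.univ.inf' hne (fun i => δ (Q i)) :=
      map_finset_inf' f hne Q
    have h2 : Finset.univ.inf' hne Q = ⨅ i, Q i := by
      rw [Finset.inf'_eq_inf, Finset.inf_eq_iInf]; simp
    have h3 : Finset.univ.inf' hne (fun i => δ (Q i)) = ⨅ i, δ (Q i) := by
      rw [Finset.inf'_eq_inf, Finset.inf_eq_iInf]; simp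
    rw [h2, h3] at h1
    exact h1.ge
  constructor
  · exact lt_of_le_of_lt (iInf_le Q i0) (hQ i0).1
  · intro a A haA
    by_cases hA : A ≤ ⨅ i, Q i
    · exact Or.inl hA
    · right
      obtain ⟨j, hj⟩ : ∃ j, ¬ A ≤ Q j := by
        by_contra h
        push_neg at h
        exact hA (le_iInf h)
      have := (hQ j).2 a A (le_trans haA (iInf_le Q j))
      rcases this with h | h
      · exact absurd h hj
      · refine le_trans ?_ key
        refine le_iInf fun i => ?_
        rw [hP i, ← hP j]
        exact h
end

section
/- Let L be a PG-lattice and M a faithful multiplication PG-lattice L-module. Then the expansion function δ₁ on M has the meet preserving property, i.e. δ₁(A ∧ B) = δ₁(A) ∧ δ₁(B) for all A, B ∈ M. -/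
open CompleteLattice

universe u v

/-!
Since `(A ⊓ B : I) = (A : I) ⊓ (B : I)`, it suffices that the radical commutes with finite meets
(a compact element below `√a ⊓ √b` has a power below `a` and one below `b`) and that
`(a ⊓ b) I = a I ⊓ b I`. For the latter take a principal `E ≤ a I ⊓ b I` and show that
`K = ((a ⊓ b) I : E)` lies below no maximal element `m`. If `m I = I`, then `m E = E`, and join
principality of `E` gives `m ⊔ (0 : E) = 1` although `(0 : E) ≤ K`. Otherwise some principal `W`
has `q = (W : I) ≰ m`; meet principality of `W` and faithfulness (`q (0 : W) = 0`) give
`q² E ≤ (a ⊓ b) I`, so `q² ≤ K ≤ m`, contradicting primality of `m`.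
-/

namespace MultiplicativeLattice

variable {L : Type u} [MultiplicativeLattice L]

instance : IsQuantale L where
  mul_sSup_distrib x s := by
    rw [mul_comm, MultiplicativeLattice.sSup_mul]
    simp only [mul_comm]
  sSup_mul_distrib := MultiplicativeLattice.sSup_mul

theorem le_one (a : L) : a ≤ 1 := one_eq_top (L := L) ▸ le_top

theorem sup_pow_add_le (u v : L) : ∀ m n : ℕ, (u ⊔ v) ^ (m + n) ≤ u ^ m ⊔ v ^ n
  | 0, _ => by simp [one_eq_top]
  | _, 0 => by simp [one_eq_top]
  | m + 1, n + 1 => by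
    have hu : u * (u ⊔ v) ^ (m + (n + 1)) ≤ u ^ (m + 1) ⊔ v ^ (n + 1) :=
      calc u * (u ⊔ v) ^ (m + (n + 1)) ≤ u * (u ^ m ⊔ v ^ (n + 1)) :=
            mul_le_mul_right (sup_pow_add_le u v m (n + 1)) u
        _ ≤ u ^ (m + 1) ⊔ v ^ (n + 1) := by
          rw [Quantale.mul_sup_distrib, ← pow_succ']
          exact sup_le_sup_left (mul_le_of_le_one_left' (le_one u)) _
    have hv : v * (u ⊔ v) ^ (m + 1 + n) ≤ u ^ (m + 1) ⊔ v ^ (n + 1) :=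
      calc v * (u ⊔ v) ^ (m + 1 + n) ≤ v * (u ^ (m + 1) ⊔ v ^ n) :=
            mul_le_mul_right (sup_pow_add_le u v (m + 1) n) v
        _ ≤ u ^ (m + 1) ⊔ v ^ (n + 1) := by
          rw [Quantale.mul_sup_distrib, ← pow_succ']
          exact sup_le_sup_right (mul_le_of_le_one_left' (le_one v)) _
    calc (u ⊔ v) ^ (m + 1 + (n + 1))
        = u * (u ⊔ v) ^ (m + (n + 1)) ⊔ v * (u ⊔ v) ^ (m + 1 + n) := by
          rw [show m + 1 + (n + 1) = m + (n + 1) + 1 by omega, pow_succ', Quantale.sup_mul_distrib,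
            show m + 1 + n = m + (n + 1) by omega]
      _ ≤ _ := sup_le hu hv

theorem _root_.IsCoatom.le_or_le_of_mul_le {m p q : L} (hm : IsCoatom m) (h : p * q ≤ m) :
    p ≤ m ∨ q ≤ m := by
  by_contra! hpq
  have hp : m ⊔ p = ⊤ := hm.lt_iff.mp (left_lt_sup.mpr hpq.1)
  have hq : m ⊔ q = ⊤ := hm.lt_iff.mp (left_lt_sup.mpr hpq.2)
  refine hm.1 (top_le_iff.mp ?_)
  calc (⊤ : L) = (m ⊔ p) * (m ⊔ q) := by rw [hp, hq, ← one_eq_top, one_mul]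
    _ = m * (m ⊔ q) ⊔ (p * m ⊔ p * q) := by
      rw [Quantale.sup_mul_distrib, Quantale.mul_sup_distrib (x := p)]
    _ ≤ m := sup_le (mul_le_of_le_one_right' (le_one _))
      (sup_le (mul_le_of_le_one_left' (le_one _)) h)

theorem radL_mono {a b : L} (h : a ≤ b) : radL a ≤ radL b :=
  sSup_le_sSup fun _ ⟨hx, n, hn, hxa⟩ => ⟨hx, n, hn, hxa.trans h⟩

theorem exists_pow_le_of_le_radL {x a : L} (hx : IsCompactElement x) (h : x ≤ radL a) :
    ∃ n, 1 ≤ n ∧ x ^ n ≤ a := by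
  set R : Set L := {y | ∃ n, 1 ≤ n ∧ y ^ n ≤ a}
  have hne : R.Nonempty := ⟨⊥, 1, le_rfl, by simp⟩
  have hdir : DirectedOn (· ≤ ·) R := by
    rintro y ⟨k, hk, hy⟩ z ⟨l, hl, hz⟩
    exact ⟨y ⊔ z, ⟨k + l, by omega, (sup_pow_add_le y z k l).trans (sup_le hy hz)⟩,
      le_sup_left, le_sup_right⟩
  have hR : radL a ≤ sSup R := sSup_le_sSup fun _ hy => hy.2
  obtain ⟨y, ⟨n, hn, hy⟩, hxy⟩ :=
    (isCompactElement_iff_le_of_directed_sSup_le L x).mp hx R hne hdir (h.trans hR)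
  exact ⟨n, hn, (pow_le_pow_left' hxy n).trans hy⟩

theorem radL_inf [IsCompactlyGenerated L] (a b : L) : radL (a ⊓ b) = radL a ⊓ radL b := by
  refine le_antisymm (le_inf (radL_mono inf_le_left) (radL_mono inf_le_right)) ?_
  rw [← sSup_compact_le_eq (radL a ⊓ radL b)]
  refine sSup_le fun x ⟨hx, hxle⟩ => ?_
  obtain ⟨k, hk, hka⟩ := exists_pow_le_of_le_radL hx (hxle.trans inf_le_left)
  obtain ⟨l, -, hlb⟩ := exists_pow_le_of_le_radL hx (hxle.trans inf_le_right)
  refine le_sSup ⟨hx, k + l, by omega, ?_⟩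
  rw [pow_add]
  exact le_inf (mul_le_of_le_one_right' (le_one _) |>.trans hka)
    (mul_le_of_le_one_left' (le_one _) |>.trans hlb)

end MultiplicativeLattice

namespace LatticeModule

open MultiplicativeLattice

variable {L : Type u} {M : Type v} [MultiplicativeLattice L] [LatticeModule L M]

theorem sup_smul (a b : L) (A : M) : (a ⊔ b) • A = a • A ⊔ b • A := by
  rw [← sSup_pair, sSup_smul, iSup_pair]

theorem smul_sup (a : L) (A B : M) : a • (A ⊔ B) = a • A ⊔ a • B := by
  rw [← sSup_pair, smul_sSup, iSup_pair]

theorem smul_mono_left {a b : L} (h : a ≤ b) (A : M) : a • A ≤ b • A := by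
  rw [← sup_eq_right.mpr h, sup_smul]
  exact le_sup_left

theorem smul_mono_right (a : L) {A B : M} (h : A ≤ B) : a • A ≤ a • B := by
  rw [← sup_eq_right.mpr h, smul_sup]
  exact le_sup_left

theorem smul_comm (a b : L) (A : M) : a • b • A = b • a • A := by
  rw [← mul_smul, mul_comm, mul_smul]

theorem mColon_smul_le (B N : M) : mColon L B N • N ≤ B := by
  rw [mColon, sSup_smul]
  exact iSup₂_le fun _ hx => hx

theorem le_mColon_iff {x : L} {B N : M} : x ≤ mColon L B N ↔ x • N ≤ B :=
  ⟨fun h => (smul_mono_left h N).trans (mColon_smul_le B N), fun h => le_sSup h⟩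

theorem mColon_inf (A B N : M) : mColon L (A ⊓ B) N = mColon L A N ⊓ mColon L B N :=
  eq_of_forall_le_iff fun _ => by simp only [le_inf_iff, le_mColon_iff]

theorem mColon_top_smul_top (hmult : IsMultiplicationModule L M) (A : M) :
    mColon L A ⊤ • (⊤ : M) = A := by
  obtain ⟨a, rfl⟩ := hmult A
  exact le_antisymm (mColon_smul_le _ _) (smul_mono_left (le_mColon_iff.mpr le_rfl) _)

theorem mColon_top_mul_mColon_bot (hfaith : IsFaithfulModule L M) (W : M) :
    mColon L W ⊤ * mColon L ⊥ W = ⊥ := by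
  refine le_bot_iff.mp (hfaith ▸ le_mColon_iff.mpr ?_)
  rw [mul_comm, mul_smul]
  exact (smul_mono_right _ (mColon_smul_le W ⊤)).trans (mColon_smul_le ⊥ W)

theorem _root_.IsPrincipalElemM.smul_inf_smul {W : M} (hW : IsPrincipalElemM L W) (a b : L) :
    a • W ⊓ b • W = (a ⊓ (b ⊔ mColon L ⊥ W)) • W := by
  rw [hW.2 b ⊥, sup_bot_eq, hW.1]

theorem _root_.IsPrincipalElemM.sup_mColon_bot_eq_top {E : M} (hE : IsPrincipalElemM L E) {m : L}
    (h : m • E = E) : m ⊔ mColon L ⊥ E = ⊤ := by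
  rw [hE.2 m ⊥, sup_bot_eq, h]
  exact top_unique (le_mColon_iff.mpr (by rw [← one_eq_top, one_smul]))

theorem _root_.IsPrincipalElemM.mul_mColon_top_le {W E : M} (hfaith : IsFaithfulModule L M)
    (hW : IsPrincipalElemM L W) {a b : L} (hE : E ≤ a • ⊤ ⊓ b • ⊤) :
    mColon L W ⊤ * mColon L W ⊤ ≤ mColon L ((a ⊓ b) • ⊤) E := by
  set q := mColon L W ⊤
  have hqE : ∀ c, E ≤ c • ⊤ → q • E ≤ c • W := fun c hc =>
    (smul_mono_right q hc).trans
      (smul_comm q c (⊤ : M) ▸ smul_mono_right c (mColon_smul_le W ⊤))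
  have hq : q * (a ⊓ (b ⊔ mColon L ⊥ W)) ≤ a ⊓ b := by
    refine le_inf ((mul_le_of_le_one_left' (le_one q)).trans inf_le_left) ?_
    calc q * (a ⊓ (b ⊔ mColon L ⊥ W)) ≤ q * b ⊔ q * mColon L ⊥ W :=
          (mul_le_mul_right inf_le_right q).trans_eq Quantale.mul_sup_distrib
      _ ≤ b := by
        rw [mColon_top_mul_mColon_bot hfaith, sup_bot_eq]
        exact mul_le_of_le_one_left' (le_one q)
  rw [le_mColon_iff, mul_smul]
  calc q • q • E ≤ q • (a • W ⊓ b • W) :=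
        smul_mono_right q (le_inf (hqE a (hE.trans inf_le_left)) (hqE b (hE.trans inf_le_right)))
    _ = (q * (a ⊓ (b ⊔ mColon L ⊥ W))) • W := by rw [hW.smul_inf_smul, mul_smul]
    _ ≤ (a ⊓ b) • ⊤ := (smul_mono_left hq W).trans (smul_mono_right _ le_top)

theorem exists_principal_mColon_top_not_le (hPGM : IsPGModule L M)
    (hmult : IsMultiplicationModule L M) {m : L} (hm : m • (⊤ : M) ≠ ⊤) :
    ∃ W : M, IsPrincipalElemM L W ∧ ¬ mColon L W ⊤ ≤ m := by
  by_contra! h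
  refine hm (top_unique ?_)
  calc (⊤ : M) = sSup {W : M | IsPrincipalElemM L W ∧ W ≤ ⊤} := hPGM ⊤
    _ ≤ m • ⊤ := sSup_le fun W hW =>
      (mColon_top_smul_top hmult W).symm.le.trans (smul_mono_left (h W hW.1) ⊤)

theorem smul_eq_self_of_smul_top_eq_top (hmult : IsMultiplicationModule L M) {m : L}
    (hm : m • (⊤ : M) = ⊤) (E : M) : m • E = E := by
  obtain ⟨c, rfl⟩ := hmult E
  rw [smul_comm, hm]

theorem inf_smul_top [IsCoatomic L] (hPGM : IsPGModule L M) (hmult : IsMultiplicationModule L M)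
    (hfaith : IsFaithfulModule L M) (a b : L) :
    (a ⊓ b) • (⊤ : M) = a • ⊤ ⊓ b • ⊤ := by
  refine le_antisymm (le_inf (smul_mono_left inf_le_left ⊤) (smul_mono_left inf_le_right ⊤)) ?_
  calc a • ⊤ ⊓ b • ⊤
      = sSup {E : M | IsPrincipalElemM L E ∧ E ≤ a • ⊤ ⊓ b • ⊤} := hPGM _
    _ ≤ (a ⊓ b) • ⊤ := sSup_le fun E ⟨hE, hEab⟩ => ?_
  suffices hK : mColon L ((a ⊓ b) • (⊤ : M)) E = ⊤ by
    rw [← LatticeModule.one_smul (L := L) E]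
    exact le_mColon_iff.mp (hK ▸ le_top)
  refine (eq_top_or_exists_le_coatom _).resolve_right fun ⟨m, hm, hKm⟩ => ?_
  by_cases hmT : m • (⊤ : M) = ⊤
  · have hbot : mColon L ⊥ E ≤ m :=
      (le_mColon_iff.mpr ((mColon_smul_le ⊥ E).trans bot_le)).trans hKm
    refine hm.1 (top_unique ?_)
    rw [← hE.sup_mColon_bot_eq_top (smul_eq_self_of_smul_top_eq_top hmult hmT E)]
    exact sup_le le_rfl hbot
  · obtain ⟨W, hW, hWm⟩ := exists_principal_mColon_top_not_le hPGM hmult hmT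
    have hq2 := (hW.mul_mColon_top_le hfaith hEab).trans hKm
    exact hWm ((hm.le_or_le_of_mul_le hq2).elim id id)

end LatticeModule

theorem stmt11_general {L : Type u} {M : Type v} [MultiplicativeLattice L] [LatticeModule L M]
    [IsCompactlyGenerated L]
    (h1cpt : IsCompactElement (1 : L))
    (hPGM : IsPGModule L M)
    (hmult : IsMultiplicationModule L M) (hfaith : IsFaithfulModule L M) :
    ∀ A B : M, delta1 L (A ⊓ B) = delta1 L A ⊓ delta1 L B := by
  have : IsCoatomic L :=
    coatomic_of_top_compact (MultiplicativeLattice.one_eq_top (L := L) ▸ h1cpt)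
  intro A B
  rw [delta1, delta1, delta1, LatticeModule.mColon_inf, MultiplicativeLattice.radL_inf,
    LatticeModule.inf_smul_top hPGM hmult hfaith]

theorem stmt11 {L : Type u} {M : Type v} [MultiplicativeLattice L] [LatticeModule L M]
    [IsCompactlyGenerated L]
    (h1cpt : IsCompactElement (1 : L))
    (hmulcpt : ∀ a b : L, IsCompactElement a → IsCompactElement b → IsCompactElement (a * b))
    (hPGL : IsPGLattice L) (hPGM : IsPGModule L M)
    (hmult : IsMultiplicationModule L M) (hfaith : IsFaithfulModule L M) :
    ∀ A B : M, delta1 L (A ⊓ B) = delta1 L A ⊓ delta1 L B :=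
  stmt11_general h1cpt hPGM hmult hfaith
end

section
/- Let M be a multiplication L-module. Then every maximal element of M is meet prime. -/
open CompleteLattice

universe u v

theorem stmt12 {L : Type u} {M : Type v} [MultiplicativeLattice L] [LatticeModule L M]
    [IsCompactlyGenerated L]
    (h1cpt : IsCompactElement (1 : L))
    (hmulcpt : ∀ a b : L, IsCompactElement a → IsCompactElement b → IsCompactElement (a * b))
    (hmult : IsMultiplicationModule L M)
    (H : M) (hH : IsMaximalM L H) : IsMeetPrimeM L H := by
  have smul_sup : ∀ (a : L) (A B : M), a • (A ⊔ B) = a • A ⊔ a • B := by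
    intro a A B
    have h := LatticeModule.smul_sSup a ({A, B} : Set M)
    simpa [sSup_pair, iSup_or, iSup_sup_eq] using h
  have smul_mono : ∀ (a : L) (A : M), a • A ≤ A := by
    intro a A
    have h1 : a ⊔ (1 : L) = 1 := by
      rw [MultiplicativeLattice.one_eq_top]; simp
    have h := LatticeModule.sSup_smul ({a, (1 : L)} : Set L) A
    rw [sSup_pair, h1] at h
    have h2 : (1 : L) • A = a • A ⊔ (1 : L) • A := by
      simpa [iSup_or, iSup_sup_eq] using h
    calc a • A ≤ a • A ⊔ (1 : L) • A := le_sup_left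
      _ = (1 : L) • A := h2.symm
      _ = A := LatticeModule.one_smul A
  refine ⟨hH.1, ?_⟩
  intro A B hAB
  by_contra hcon
  push_neg at hcon
  obtain ⟨hA, hB⟩ := hcon
  obtain ⟨b, hb⟩ := hmult B
  have htop : H ⊔ A = ⊤ := by
    rcases hH.2 (H ⊔ A) le_sup_left with h | h
    · exact absurd (le_sup_right.trans h.le) hA
    · exact h
  have : B ≤ H := by
    have h1 : B = b • H ⊔ b • A := by rw [hb, ← htop, smul_sup]
    have h2 : b • H ≤ H := smul_mono b H
    have h3 : b • A ≤ H := by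
      have hba : b • A ≤ A ⊓ B := by
        refine le_inf (smul_mono b A) ?_
        rw [hb]
        have : A ≤ (⊤ : M) := le_top
        have h := LatticeModule.smul_sSup b ({A, (⊤ : M)} : Set M)
        rw [sSup_pair] at h
        have h4 : b • ((⊤ : M)) = b • A ⊔ b • (⊤ : M) := by
          rw [sup_eq_right.mpr (le_top : A ≤ (⊤ : M))] at h
          simpa [iSup_or, iSup_sup_eq] using h
        rw [h4]; exact le_sup_left
      exact hba.trans hAB
    rw [h1]; exact sup_le h2 h3
  exact hB this
end

section
/- Let M be a multiplication L-module. Then the expansion function δ₂ on M has the meet preserving property, i.e. δ₂(A ∧ B) = δ₂(A) ∧ δ₂(B) for all A, B ∈ M. -/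
open CompleteLattice

universe u v

section Aux

variable {L : Type u} {M : Type v} [MultiplicativeLattice L] [LatticeModule L M]

lemma aux_sup_mul (x y z : L) : (x ⊔ y) * z = x * z ⊔ y * z := by
  have := MultiplicativeLattice.sSup_mul ({x, y} : Set L) z
  rw [sSup_pair, iSup_pair] at this
  exact this

lemma aux_mul_mono_left {x y : L} (z : L) (h : x ≤ y) : x * z ≤ y * z := by
  have : (x ⊔ y) * z = x * z ⊔ y * z := aux_sup_mul x y z
  rw [sup_eq_right.mpr h] at this
  rw [this]; exact le_sup_left

lemma aux_sup_smul (x y : L) (A : M) : (x ⊔ y) • A = x • A ⊔ y • A := by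
  have := LatticeModule.sSup_smul ({x, y} : Set L) A
  rw [sSup_pair, iSup_pair] at this
  exact this

lemma aux_smul_mono_left {x y : L} (A : M) (h : x ≤ y) : x • A ≤ y • A := by
  have : (x ⊔ y) • A = x • A ⊔ y • A := aux_sup_smul x y A
  rw [sup_eq_right.mpr h] at this
  rw [this]; exact le_sup_left

lemma aux_smul_mono_right (x : L) {A B : M} (h : A ≤ B) : x • A ≤ x • B := by
  have := LatticeModule.smul_sSup x ({A, B} : Set M)
  rw [sSup_pair, sup_eq_right.mpr h] at this
  simp only [iSup_pair] at this
  rw [this]; exact le_sup_left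

lemma aux_smul_le_self (x : L) (A : M) : x • A ≤ A := by
  have h1 : x ≤ (1 : L) := by rw [MultiplicativeLattice.one_eq_top]; exact le_top
  calc x • A ≤ (1 : L) • A := aux_smul_mono_left A h1
    _ = A := LatticeModule.one_smul A

lemma aux_delta2_of_ne_top {A : M} (h : A ≠ ⊤) :
    delta2 L A = sInf {H : M | A ≤ H ∧ IsMaximalM L H} := by
  simp [delta2, h]

lemma aux_maximal_meetPrime (hmult : IsMultiplicationModule L M) {H : M}
    (hH : IsMaximalM L H) : ∀ A B : M, A ⊓ B ≤ H → A ≤ H ∨ B ≤ H := by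
  intro A B hAB
  by_contra hc
  push_neg at hc
  obtain ⟨hA, hB⟩ := hc
  obtain ⟨a, rfl⟩ := hmult A
  obtain ⟨b, rfl⟩ := hmult B
  obtain ⟨h, hHeq⟩ := hmult H
  have h1 : H ⊔ a • (⊤ : M) = ⊤ := by
    rcases hH.2 (H ⊔ a • ⊤) le_sup_left with h' | h'
    · exact absurd (le_sup_right.trans h'.le) hA
    · exact h'
  have h2 : H ⊔ b • (⊤ : M) = ⊤ := by
    rcases hH.2 (H ⊔ b • ⊤) le_sup_left with h' | h'
    · exact absurd (le_sup_right.trans h'.le) hB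
    · exact h'
  have e1 : (h ⊔ a) • (⊤ : M) = ⊤ := by
    rw [aux_sup_smul, ← hHeq, h1]
  have e2 : (h ⊔ b) • (⊤ : M) = ⊤ := by
    rw [aux_sup_smul, ← hHeq, h2]
  have etop : ((h ⊔ a) * (h ⊔ b)) • (⊤ : M) = ⊤ := by
    rw [LatticeModule.mul_smul, e2, e1]
  -- the product scalar is below h ⊔ a*b
  have hle1 : ∀ x : L, x ≤ 1 := fun x => by
    rw [MultiplicativeLattice.one_eq_top]; exact le_top
  have hmul_le : ∀ x : L, x * h ≤ h := fun x =>
    (aux_mul_mono_left h (hle1 x)).trans (one_mul h).le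
  have hscal : (h ⊔ a) * (h ⊔ b) ≤ h ⊔ a * b := by
    rw [aux_sup_mul, mul_comm h (h ⊔ b), aux_sup_mul, mul_comm a (h ⊔ b), aux_sup_mul]
    have ha' : h * a ≤ h := by rw [mul_comm]; exact hmul_le a
    have hab : b * a ≤ a * b := by rw [mul_comm]
    exact sup_le (sup_le ((hmul_le h).trans le_sup_left) ((hmul_le b).trans le_sup_left)) (sup_le (ha'.trans le_sup_left) (hab.trans le_sup_right))
  have habH : (a * b) • (⊤ : M) ≤ H := by
    have h1' : (a * b) • (⊤ : M) ≤ a • (⊤ : M) := by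
      rw [LatticeModule.mul_smul]
      exact aux_smul_mono_right a le_top
    have h2' : (a * b) • (⊤ : M) ≤ b • (⊤ : M) := by
      rw [LatticeModule.mul_smul]
      exact aux_smul_le_self a _
    exact (le_inf h1' h2').trans hAB
  have hfin : (⊤ : M) ≤ H := by
    calc (⊤ : M) = ((h ⊔ a) * (h ⊔ b)) • (⊤ : M) := etop.symm
      _ ≤ (h ⊔ a * b) • (⊤ : M) := aux_smul_mono_left _ hscal
      _ = h • (⊤ : M) ⊔ (a * b) • (⊤ : M) := aux_sup_smul _ _ _
      _ ≤ H := sup_le (le_of_eq hHeq.symm) habH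
  exact absurd (top_le_iff.mp hfin) (ne_of_lt hH.1)

end Aux

theorem stmt13 {L : Type u} {M : Type v} [MultiplicativeLattice L] [LatticeModule L M]
    [IsCompactlyGenerated L]
    (h1cpt : IsCompactElement (1 : L))
    (hmulcpt : ∀ a b : L, IsCompactElement a → IsCompactElement b → IsCompactElement (a * b))
    (hmult : IsMultiplicationModule L M) :
    ∀ A B : M, delta2 L (A ⊓ B) = delta2 L A ⊓ delta2 L B := by
  intro A B
  by_cases hA : A = ⊤
  · subst hA
    rw [top_inf_eq]
    have ht : delta2 L (⊤ : M) = ⊤ := by simp [delta2]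
    rw [ht, top_inf_eq]
  by_cases hB : B = ⊤
  · subst hB
    rw [inf_top_eq]
    have ht : delta2 L (⊤ : M) = ⊤ := by simp [delta2]
    rw [ht, inf_top_eq]
  have hAB : A ⊓ B ≠ ⊤ := fun h => hA (top_le_iff.mp (h.symm.le.trans inf_le_left))
  rw [aux_delta2_of_ne_top hA, aux_delta2_of_ne_top hB, aux_delta2_of_ne_top hAB]
  apply le_antisymm
  · apply le_inf
    · exact _root_.le_sInf fun H ⟨hle, hmax⟩ => _root_.sInf_le ⟨inf_le_left.trans hle, hmax⟩
    · exact _root_.le_sInf fun H ⟨hle, hmax⟩ => _root_.sInf_le ⟨inf_le_right.trans hle, hmax⟩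
  · apply _root_.le_sInf
    rintro H ⟨hle, hmax⟩
    rcases aux_maximal_meetPrime hmult hmax A B hle with h | h
    · exact inf_le_left.trans (_root_.sInf_le ⟨h, hmax⟩)
    · exact inf_le_right.trans (_root_.sInf_le ⟨h, hmax⟩)
end
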